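/- arXiv:2401.07101 — 6 statements merged into one kernel-verified Lean document; each statement's English description precedes it below -/
import Mathlib

section
/- Let A be a nontrivial ring, F a field, and ι : F → A an injective ring homomorphism. Let σ₁, …, σ_m be pairwise distinct field automorphisms of F and let z₁, …, z_m be units of A such that zᵢ⁻¹ · ι(c) · zᵢ = ι(σᵢ(c)) for all c ∈ F and all 1 ≤ i ≤ m. If a₁, …, a_m ∈ F satisfy ∑_{i=1}^{m} ι(aᵢ) · zᵢ = 0 in A, then aᵢ = 0 for all i. (In other words, units of A implementing pairwise distinct automorphisms of F by conjugation are left linearly independent over ι(F).) -/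
/-- Units of a nontrivial ring `A` implementing pairwise distinct
automorphisms of a field `F` (embedded via an injective ring hom `ι`) by conjugation
are left linearly independent over `ι(F)`. -/
theorem stmt0 {A F : Type*} [Ring A] [Nontrivial A] [Field F]
    (ι : F →+* A) (hι : Function.Injective ι) {m : ℕ}
    (σ : Fin m → (F ≃+* F)) (hσ : ∀ i j : Fin m, i ≠ j → σ i ≠ σ j)
    (z : Fin m → Aˣ)
    (hz : ∀ (i : Fin m) (c : F), (↑(z i)⁻¹ : A) * ι c * (z i : A) = ι (σ i c))
    (a : Fin m → F) (ha : ∑ i, ι (a i) * (z i : A) = 0) :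
    ∀ i, a i = 0 := by
  have hz' : ∀ (i : Fin m) (d : F), ι d * (z i : A) = (z i : A) * ι (σ i d) := by
    intro i d
    have h := congrArg (fun x => (z i : A) * x) (hz i d)
    simpa [← mul_assoc] using h
  suffices H : ∀ n (s : Finset (Fin m)) (a : Fin m → F),
      s.card ≤ n → (∑ i ∈ s, ι (a i) * (z i : A)) = 0 → ∀ i ∈ s, a i = 0 by
    intro i
    exact H m Finset.univ a (by simp) (by simpa using ha) i (Finset.mem_univ i)
  intro n
  induction n with
  | zero =>
    intro s a hcard _ i hi
    have : s = ∅ := Finset.card_eq_zero.mp (Nat.le_zero.mp hcard)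
    simp [this] at hi
  | succ n IH =>
    intro s a hcard hsum i₀ hi₀
    have hj : ∀ j ∈ s, j ≠ i₀ → a j = 0 := by
      intro j hjs hne
      obtain ⟨c, hc⟩ : ∃ c, σ j c ≠ σ i₀ c := by
        by_contra h
        push_neg at h
        exact hσ j i₀ hne (RingEquiv.ext h)
      set b : Fin m → F := fun k => a k * (c - (σ k).symm (σ i₀ c)) with hb
      have hterm : ∀ k, ι (b k) * (z k : A)
          = ι c * (ι (a k) * (z k : A)) - (ι (a k) * (z k : A)) * ι (σ i₀ c) := by
        intro k
        have h2 : (z k : A) * ι (σ i₀ c) = ι ((σ k).symm (σ i₀ c)) * (z k : A) := by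
          have := hz' k ((σ k).symm (σ i₀ c))
          simpa using this.symm
        calc ι (b k) * (z k : A)
            = ι (a k) * ι c * (z k : A) - ι (a k) * (ι ((σ k).symm (σ i₀ c)) * (z k : A)) := by
              simp [hb, mul_sub, sub_mul, mul_assoc]
          _ = ι c * (ι (a k) * (z k : A)) - (ι (a k) * (z k : A)) * ι (σ i₀ c) := by
              rw [← h2, ← map_mul, mul_comm (a k) c, map_mul, mul_assoc, mul_assoc]
      have hsumb : ∑ k ∈ s, ι (b k) * (z k : A) = 0 := by
        rw [Finset.sum_congr rfl fun k _ => hterm k, Finset.sum_sub_distrib]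
        rw [← Finset.mul_sum, ← Finset.sum_mul, hsum]
        simp
      have hb0 : b i₀ = 0 := by simp [hb]
      have hsum2 : ∑ k ∈ s.erase i₀, ι (b k) * (z k : A) = 0 := by
        rw [Finset.sum_erase_eq_sub hi₀, hsumb, hb0]
        simp
      have hcard2 : (s.erase i₀).card ≤ n := by
        have := Finset.card_erase_of_mem hi₀
        omega
      have hbj := IH (s.erase i₀) b hcard2 hsum2 j (Finset.mem_erase.mpr ⟨hne, hjs⟩)
      have hfac : c - (σ j).symm (σ i₀ c) ≠ 0 := by
        intro h
        apply hc
        have : (σ j).symm (σ i₀ c) = c := (sub_eq_zero.mp h).symm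
        calc σ j c = σ j ((σ j).symm (σ i₀ c)) := by rw [this]
          _ = σ i₀ c := (σ j).apply_symm_apply _
      rcases mul_eq_zero.mp hbj with h | h
      · exact h
      · exact absurd h hfac
    have : ∑ k ∈ s, ι (a k) * (z k : A) = ι (a i₀) * (z i₀ : A) := by
      refine Finset.sum_eq_single_of_mem i₀ hi₀ fun k hk hne => ?_
      rw [hj k hk hne]
      simp
    rw [this] at hsum
    have : ι (a i₀) = 0 := (Units.mul_left_eq_zero (z i₀)).mp hsum
    exact hι (by simpa using this)
end

section
/- Let F be a field of characteristic zero and E/F a finite Galois extension of degree k, with Galois group Gal(E/F) enumerated as σ₁, …, σ_k where σ₁ is the identity. Let w ∈ E be a normal element of E/F. Then there exist α₁, …, α_k ∈ E satisfying the system: ∑_{i=1}^{k} αᵢ · σᵢ(w) = ∑_{i=1}^{k} σᵢ(w), and ∑_{i=1}^{k} αᵢ · σᵢ(σⱼ(w)) = w − σⱼ(w) for every 2 ≤ j ≤ k. Moreover, for any α₁, …, α_k ∈ E satisfying this system, the F-linear endomorphism of E given by x ↦ ∑_{i=1}^{k} αᵢ · σᵢ(x) is bijective. -/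
/-!
The system prescribes `T := ∑ i, α i • σ i` on the normal basis: `T (σ j w) = t j` with
`t 0 = ∑ i, σ i w` and `t j = w - σ j w` otherwise. It is solvable because, by Dedekind's
independence of characters, the rows `(σ i (σ j w))_j` are `k` independent vectors of `Eᵏ`.
Any solution is bijective because the `t j` still span `E`: `k • w = t 0 + ∑_{j ≠ 0} t j` and
`σ j w = w - t j`, and `k` is invertible in characteristic zero.
-/

open Function Set Submodule

theorem linearIndependent_algHom_apply_of_span_eq_top {R A B ι κ : Type*} [CommSemiring R]
    [Semiring A] [Algebra R A] [CommRing B] [IsDomain B] [Algebra R B]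
    {g : ι → (A →ₐ[R] B)} (hg : Injective g) {s : κ → A} (hs : span R (range s) = ⊤) :
    LinearIndependent B fun i j => g i (s j) := by
  have hrestrict : Injective (LinearMap.funLeft B B s ∘ₗ LinearMap.ltoFun R A B B) :=
    fun f f' h => LinearMap.ext_on hs (by rintro _ ⟨j, rfl⟩; exact congrFun h j)
  exact ((linearIndependent_toLinearMap R A B).comp g hg).map' _
    (LinearMap.ker_eq_bot.mpr hrestrict)

theorem span_range_ite_sum_sub_eq_top {K V ι : Type*} [Field K] [AddCommGroup V] [Module K V]
    [Fintype ι] [DecidableEq ι] {b : ι → V} (hb : span K (range b) = ⊤) (i₀ : ι)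
    (hcard : (Fintype.card ι : K) ≠ 0) :
    span K (range fun j => if j = i₀ then ∑ i, b i else b i₀ - b j) = ⊤ := by
  set S := span K (range fun j => if j = i₀ then ∑ i, b i else b i₀ - b j)
  have hdiff : ∀ j, b i₀ - b j ∈ S := by
    intro j
    rcases eq_or_ne j i₀ with rfl | hj
    · simp
    · exact subset_span ⟨j, by simp [hj]⟩
  have hsum : ∑ i, b i ∈ S := subset_span ⟨i₀, by simp⟩
  have hbase : b i₀ ∈ S := by
    have hcount : (Fintype.card ι : K) • b i₀ = ∑ i, b i + ∑ j, (b i₀ - b j) := by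
      rw [Finset.sum_sub_distrib, Finset.sum_const, Finset.card_univ, Nat.cast_smul_eq_nsmul]
      abel
    have := S.smul_mem (Fintype.card ι : K)⁻¹
      (hcount ▸ S.add_mem hsum (S.sum_mem fun j _ => hdiff j))
    rwa [inv_smul_smul₀ hcard] at this
  refine eq_top_iff.mpr (hb ▸ span_le.mpr ?_)
  rintro _ ⟨j, rfl⟩
  simpa using S.sub_mem hbase (hdiff j)

theorem exists_sum_mul_algEquiv_apply_eq {F E ι : Type*} [Field F] [Field E] [Algebra F E]
    [Fintype ι] {σ : ι → (E ≃ₐ[F] E)} (hσ : Injective σ) {w : E}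
    (hspan : span F (range fun i => σ i w) = ⊤) (t : ι → E) :
    ∃ α : ι → E, ∀ j, ∑ i, α i * σ i (σ j w) = t j := by
  have hrows : LinearIndependent E fun i j => σ i (σ j w) :=
    linearIndependent_algHom_apply_of_span_eq_top (g := fun i => (σ i : E →ₐ[F] E))
      (fun i j h => hσ (AlgEquiv.coe_toAlgHom_injective h)) hspan
  obtain ⟨α, hα⟩ := (top_le_span_range_iff_forall_exists_fun E).mp
    (hrows.span_eq_top_of_card_eq_finrank' (by simp)).ge t
  exact ⟨α, fun j => by simpa using congrFun hα j⟩

theorem bijective_sum_mul_algEquiv_apply {F E ι : Type*} [Field F] [Field E] [Algebra F E]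
    [FiniteDimensional F E] [Fintype ι] (σ : ι → (E ≃ₐ[F] E)) (α : ι → E) {s : Set E}
    (hs : span F s = ⊤) (hsT : s ⊆ range fun x => ∑ i, α i * σ i x) :
    Bijective fun x => ∑ i, α i * σ i x := by
  let T : E →ₗ[F] E := ∑ i, α i • (σ i).toLinearMap
  have hT : ⇑T = fun x => ∑ i, α i * σ i x := by
    ext x
    simp [T]
  have hsurj : Surjective T := by
    rw [← LinearMap.range_eq_top, eq_top_iff, ← hs, span_le, LinearMap.coe_range, hT]
    exact hsT
  exact hT ▸ ⟨LinearMap.injective_iff_surjective.mpr hsurj, hsurj⟩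

theorem stmt2_general {F E : Type*} [Field F] [Field E] [Algebra F E] [CharZero F]
    [FiniteDimensional F E] {k : ℕ} [NeZero k]
    (σ : Fin k → (E ≃ₐ[F] E)) (hσ : Function.Bijective σ) (hσ0 : σ 0 = 1)
    (w : E)
    (hspan : Submodule.span F (Set.range fun i : Fin k => σ i w) = ⊤) :
    (∃ α : Fin k → E,
      (∑ i, α i * σ i w = ∑ i, σ i w) ∧
      ∀ j : Fin k, j ≠ 0 → ∑ i, α i * σ i (σ j w) = w - σ j w) ∧
    (∀ α : Fin k → E,
      ((∑ i, α i * σ i w = ∑ i, σ i w) ∧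
        ∀ j : Fin k, j ≠ 0 → ∑ i, α i * σ i (σ j w) = w - σ j w) →
      Function.Bijective (fun x : E => ∑ i, α i * σ i x)) := by
  have hσ0w : σ 0 w = w := by rw [hσ0]; rfl
  set t : Fin k → E := fun j => if j = 0 then ∑ i, σ i w else σ 0 w - σ j w
  have hsystem : ∀ α : Fin k → E, ((∑ i, α i * σ i w = ∑ i, σ i w) ∧
      ∀ j : Fin k, j ≠ 0 → ∑ i, α i * σ i (σ j w) = w - σ j w) ↔
      ∀ j, ∑ i, α i * σ i (σ j w) = t j := by
    intro α
    refine ⟨fun ⟨h0, h⟩ j => ?_, fun h => ⟨?_, fun j hj => ?_⟩⟩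
    · rcases eq_or_ne j 0 with rfl | hj
      · simpa [t, hσ0w] using h0
      · simpa [t, hj, hσ0w] using h j hj
    · simpa [t, hσ0w] using h 0
    · simpa [t, hj, hσ0w] using h j
  simp_rw [hsystem]
  refine ⟨exists_sum_mul_algEquiv_apply_eq hσ.1 hspan t, fun α hα => ?_⟩
  refine bijective_sum_mul_algEquiv_apply σ α
    (span_range_ite_sum_sub_eq_top hspan 0 (by simp [NeZero.ne k])) ?_
  rintro _ ⟨j, rfl⟩
  exact ⟨σ j w, hα j⟩

/-- Let `E/F` be a finite Galois extension of characteristic-zero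
fields of degree `k`, with Galois group enumerated as `σ 0 = id, σ 1, …, σ (k-1)`,
and let `w` be a normal element of `E/F`.  Then the linear system
`∑ i, α i * σ i w = ∑ i, σ i w` and `∑ i, α i * σ i (σ j w) = w - σ j w` (for `j ≠ 0`)
has a solution `α`, and for any solution `α` the `F`-linear endomorphism
`x ↦ ∑ i, α i * σ i x` of `E` is bijective. -/
theorem stmt2 {F E : Type*} [Field F] [Field E] [Algebra F E] [CharZero F]
    [FiniteDimensional F E] [IsGalois F E] {k : ℕ} [NeZero k]
    (hk : Module.finrank F E = k)
    (σ : Fin k → (E ≃ₐ[F] E)) (hσ : Function.Bijective σ) (hσ0 : σ 0 = 1)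
    (w : E)
    (hli : LinearIndependent F (fun i : Fin k => σ i w))
    (hspan : Submodule.span F (Set.range fun i : Fin k => σ i w) = ⊤) :
    (∃ α : Fin k → E,
      (∑ i, α i * σ i w = ∑ i, σ i w) ∧
      ∀ j : Fin k, j ≠ 0 → ∑ i, α i * σ i (σ j w) = w - σ j w) ∧
    (∀ α : Fin k → E,
      ((∑ i, α i * σ i w = ∑ i, σ i w) ∧
        ∀ j : Fin k, j ≠ 0 → ∑ i, α i * σ i (σ j w) = w - σ j w) →
      Function.Bijective (fun x : E => ∑ i, α i * σ i x)) :=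
  stmt2_general σ hσ hσ0 w hspan
end

section
/- Let F be a field of characteristic zero and E/F a finite Galois extension of degree k with Galois group Gal(E/F) = {σ₁, …, σ_k}, σ₁ = id. Let w ∈ E be a normal element of E/F, and let α₁, …, α_k ∈ E satisfy: ∑_{i=1}^{k} αᵢ · σᵢ(w) = ∑_{i=1}^{k} σᵢ(w) and ∑_{i=1}^{k} αᵢ · σᵢ(σⱼ(w)) = w − σⱼ(w) for 2 ≤ j ≤ k. In the F-algebra End_F(E) of F-linear endomorphisms of E, let Ê := (1/k) · ∑_{i=1}^{k} σᵢ and let A := ∑_{i=1}^{k} (multiplication by αᵢ) ∘ σᵢ (which is invertible). Then the family eᵢ := σᵢ⁻¹ ∘ A⁻¹ ∘ Ê ∘ A ∘ σᵢ, for 1 ≤ i ≤ k, is a complete set of orthogonal primitive idempotents of End_F(E): each eᵢ is a nonzero idempotent, eᵢ ∘ eⱼ = 0 for i ≠ j, ∑_{i=1}^{k} eᵢ = id, and no eᵢ can be written as e' + e'' with e', e'' nonzero idempotents of End_F(E) satisfying e' ∘ e'' = 0. -/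
/-!
Put `vⱼ = σⱼ⁻¹ w`; these form a basis of `E`. The averaging operator `Ê` kills every
`x - τ x` and fixes `c = ∑ σᵢ w = A w`, so the equations defining `α` say exactly that
`Ê (A (τ w))` is `A w` for `τ = 1` and `0` otherwise. Consequently `eᵢ vⱼ = δᵢⱼ vⱼ`: the `eᵢ`
are the coordinate projections of the basis `(vⱼ)`, hence complete orthogonal idempotents of
rank one, and a rank-one idempotent is not the sum of two nonzero orthogonal idempotents.
`A` is invertible since its range contains `c`, then `w` (as `A c = k • w`), then every
`σⱼ w = w - A (σⱼ w)`.
-/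

open Module LinearMap Function

theorem Module.End.eq_zero_or_eq_zero_of_finrank_range_le_one {K V : Type*} [DivisionRing K]
    [AddCommGroup V] [Module K V] [FiniteDimensional K V] {p q : Module.End K V}
    (hp : IsIdempotentElem p) (hq : IsIdempotentElem q) (hpq : p * q = 0)
    (hsum : IsIdempotentElem (p + q)) (hrank : finrank K (range (p + q)) ≤ 1) :
    p = 0 ∨ q = 0 := by
  have hqp : q * p = 0 := by simpa [hpq] using (hp.add_iff hq).mp hsum
  have hdisj : range p ⊓ range q = ⊥ := by
    refine eq_bot_iff.mpr fun x hx => ?_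
    obtain ⟨hxp, hxq⟩ := Submodule.mem_inf.mp hx
    calc x = (p * q) x := by
          rw [Module.End.mul_apply, hq.mem_range_iff.mp hxq, hp.mem_range_iff.mp hxp]
      _ = 0 := by rw [hpq, LinearMap.zero_apply]
  have hp_le : range p ≤ range (p + q) :=
    calc range p = range ((p + q) * p) := by rw [add_mul, hp.eq, hqp, add_zero]
      _ ≤ range (p + q) := range_comp_le_range p (p + q)
  have hq_le : range q ≤ range (p + q) :=
    calc range q = range ((p + q) * q) := by rw [add_mul, hq.eq, hpq, zero_add]
      _ ≤ range (p + q) := range_comp_le_range q (p + q)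
  have hadd := Submodule.finrank_sup_add_finrank_inf_eq (range p) (range q)
  rw [hdisj, finrank_bot, add_zero] at hadd
  have hsup := Submodule.finrank_mono (sup_le hp_le hq_le)
  by_contra! h
  have h1 := Submodule.one_le_finrank_iff.mpr (mt range_eq_bot.mp h.1)
  have h2 := Submodule.one_le_finrank_iff.mpr (mt range_eq_bot.mp h.2)
  omega

namespace Module.Basis

variable {R M ι : Type*} [Semiring R] [AddCommMonoid M] [Module R M] [DecidableEq ι]
  (b : Basis ι R M) {f : ι → Module.End R M}

theorem completeOrthogonalIdempotents_of_apply_eq_ite [Fintype ι]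
    (hf : ∀ i j, f i (b j) = if i = j then b j else 0) : CompleteOrthogonalIdempotents f where
  idem i := b.ext fun j => by by_cases h : i = j <;> simp [hf, h]
  ortho i j hij := b.ext fun l => by
    by_cases h : j = l
    · subst h; simp [hf, hij]
    · simp [hf, h]
  complete := b.ext fun j => by simp [hf]

theorem range_eq_span_singleton_of_apply_eq_ite
    (hf : ∀ i j, f i (b j) = if i = j then b j else 0) (i : ι) : range (f i) = R ∙ b i := by
  refine le_antisymm ?_ (Submodule.span_singleton_le_iff_mem _ _ |>.mpr ⟨b i, by simp [hf]⟩)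
  rw [range_eq_map, ← b.span_eq, Submodule.map_span_le]
  rintro _ ⟨j, rfl⟩
  rw [hf]
  split_ifs with h
  · exact h ▸ Submodule.mem_span_singleton_self _
  · exact zero_mem _

theorem ne_zero_of_apply_eq_ite [Nontrivial R]
    (hf : ∀ i j, f i (b j) = if i = j then b j else 0) (i : ι) : f i ≠ 0 :=
  fun h => b.ne_zero i (by simpa [h] using (hf i i).symm)

end Module.Basis

theorem LinearMap.surjective_of_apply_eq_sub {K V ι : Type*} [DivisionRing K] [AddCommGroup V]
    [Module K V] [Fintype ι] {v : ι → V} (hv : Submodule.span K (Set.range v) = ⊤)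
    {i₀ : ι} (hcard : (Fintype.card ι : K) ≠ 0) {A : V →ₗ[K] V} (hA₀ : A (v i₀) = ∑ j, v j)
    (hA : ∀ j, j ≠ i₀ → A (v j) = v i₀ - v j) : Surjective A := by
  classical
  have hAv : ∀ j, A (v j) = v i₀ - v j + if j = i₀ then ∑ l, v l else 0 := by
    intro j
    split_ifs with h
    · simp [h, hA₀]
    · simp [hA j h]
  have hAsum : A (∑ j, v j) = Fintype.card ι • v i₀ := by
    simp [map_sum, hAv, Finset.sum_add_distrib, Finset.sum_sub_distrib]
  have hv₀ : v i₀ ∈ range A := ⟨(Fintype.card ι : K)⁻¹ • ∑ j, v j, by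
    rw [map_smul, hAsum, ← Nat.cast_smul_eq_nsmul K, smul_smul, inv_mul_cancel₀ hcard, one_smul]⟩
  rw [← range_eq_top, eq_top_iff, ← hv, Submodule.span_le]
  rintro _ ⟨j, rfl⟩
  have hvj : v j = v i₀ + (if j = i₀ then ∑ l, v l else 0) - A (v j) := by rw [hAv]; abel
  rw [SetLike.mem_coe, hvj]
  refine sub_mem (add_mem hv₀ ?_) (mem_range_self A _)
  split_ifs
  exacts [⟨v i₀, hA₀⟩, zero_mem _]

theorem exists_basis_eq_inv_apply {F E ι : Type*} [Field F] [Field E] [Algebra F E]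
    {σ : ι → E ≃ₐ[F] E} (hσ : Bijective σ) {w : E}
    (hli : LinearIndependent F fun i => σ i w)
    (hspan : Submodule.span F (Set.range fun i => σ i w) = ⊤) :
    ∃ b : Basis ι F E, ∀ j, b j = (σ j)⁻¹ w := by
  let σ' := Equiv.ofBijective σ hσ
  let π : ι ≃ ι := σ'.trans ((Equiv.inv _).trans σ'.symm)
  refine ⟨(Basis.mk hli hspan.ge).reindex π.symm, fun j => ?_⟩
  simp [π, σ', Equiv.ofBijective_apply_symm_apply]

section AutomorphismSums

variable {F E ι : Type*} [Field F] [Field E] [Algebra F E] [FiniteDimensional F E] [Fintype ι]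
  {σ : ι → E ≃ₐ[F] E}

theorem sum_apply_apply_of_bijective (hσ : Bijective σ) (τ : E ≃ₐ[F] E) (x : E) :
    ∑ i, σ i (τ x) = ∑ i, σ i x := by
  rw [hσ.sum_comp (fun ρ => ρ (τ x)), hσ.sum_comp (fun ρ => ρ x)]
  exact Equiv.sum_comp (Equiv.mulRight τ) fun ρ : E ≃ₐ[F] E => ρ x

theorem apply_sum_apply_of_bijective (hσ : Bijective σ) (τ : E ≃ₐ[F] E) (x : E) :
    τ (∑ i, σ i x) = ∑ i, σ i x := by
  rw [map_sum, hσ.sum_comp (fun ρ => τ (ρ x)), hσ.sum_comp (fun ρ => ρ x)]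
  exact Equiv.sum_comp (Equiv.mulLeft τ) fun ρ : E ≃ₐ[F] E => ρ x

end AutomorphismSums

theorem averaging_apply_eq_ite {F E : Type*} [Field F] [Field E] [Algebra F E]
    [FiniteDimensional F E] {k : ℕ} [NeZero k] [DecidableEq (E ≃ₐ[F] E)]
    {σ : Fin k → E ≃ₐ[F] E} (hσ : Bijective σ) (hσ0 : σ 0 = 1) (hk : (k : F) ≠ 0)
    {w : E} {A : Module.End F E}
    (hAw : A w = ∑ i, σ i w) (hAσ : ∀ j, j ≠ 0 → A (σ j w) = w - σ j w) (τ : E ≃ₐ[F] E) :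
    ((k : F)⁻¹ • ∑ i, (σ i).toLinearMap : Module.End F E) (A (τ w)) =
      if τ = 1 then A w else 0 := by
  obtain ⟨l, rfl⟩ := hσ.2 τ
  simp only [LinearMap.smul_apply, LinearMap.coe_sum, Finset.sum_apply,
    AlgEquiv.toLinearMap_apply, hσ.injective.eq_iff' hσ0]
  split_ifs with hl
  · have hfix : ∀ i, σ i (A w) = A w := fun i => hAw ▸ apply_sum_apply_of_bijective hσ (σ i) w
    simp [hl, hσ0, hfix, ← Nat.cast_smul_eq_nsmul F, hk]
  · simp [hAσ l hl, Finset.sum_sub_distrib, sum_apply_apply_of_bijective hσ]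

theorem conj_apply_inv_apply_eq_ite {R S : Type*} [CommSemiring R] [Semiring S] [Algebra R S]
    [DecidableEq (S ≃ₐ[R] S)] {A P : Module.End R S} (hA : IsUnit A) {w : S}
    (hP : ∀ τ : S ≃ₐ[R] S, P (A (τ w)) = if τ = 1 then A w else 0) (ρ τ : S ≃ₐ[R] S) :
    ((ρ⁻¹ : S ≃ₐ[R] S).toLinearMap * Ring.inverse A * P * A * ρ.toLinearMap) (τ⁻¹ w) =
      if ρ = τ then τ⁻¹ w else 0 := by
  have hρτ : ρ (τ⁻¹ w) = (ρ * τ⁻¹) w := rfl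
  simp only [Module.End.mul_apply, AlgEquiv.toLinearMap_apply, hρτ, hP, mul_inv_eq_one]
  split_ifs with h
  · subst h
    rw [← Module.End.mul_apply (Ring.inverse A), Ring.inverse_mul_cancel A hA,
      Module.End.one_apply]
  · simp

theorem stmt3_general {F E : Type*} [Field F] [Field E] [Algebra F E] [CharZero F]
    [FiniteDimensional F E] {k : ℕ} [NeZero k]
    (σ : Fin k → (E ≃ₐ[F] E)) (hσ : Function.Bijective σ) (hσ0 : σ 0 = 1)
    (w : E)
    (hli : LinearIndependent F (fun i : Fin k => σ i w))
    (hspan : Submodule.span F (Set.range fun i : Fin k => σ i w) = ⊤)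
    (α : Fin k → E)
    (hα : (∑ i, α i * σ i w = ∑ i, σ i w) ∧
      ∀ j : Fin k, j ≠ 0 → ∑ i, α i * σ i (σ j w) = w - σ j w)
    (Ehat A : Module.End F E)
    (hEhat : Ehat = (k : F)⁻¹ • ∑ i, ((σ i).toLinearMap : Module.End F E))
    (hA : A = ∑ i, (LinearMap.mulLeft F (α i) : Module.End F E) * (σ i).toLinearMap)
    (e : Fin k → Module.End F E)
    (he : ∀ i, e i = (((σ i)⁻¹ : E ≃ₐ[F] E).toLinearMap : Module.End F E) *
        Ring.inverse A * Ehat * A * (σ i).toLinearMap) :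
    IsUnit A ∧
    (∀ i, e i ≠ 0 ∧ IsIdempotentElem (e i)) ∧
    (∀ i j, i ≠ j → e i * e j = 0) ∧
    (∑ i, e i = 1) ∧
    (∀ i, ¬ ∃ e' e'' : Module.End F E, e' ≠ 0 ∧ e'' ≠ 0 ∧
      IsIdempotentElem e' ∧ IsIdempotentElem e'' ∧ e' * e'' = 0 ∧ e i = e' + e'') := by
  classical
  have hAx : ∀ x, A x = ∑ i, α i * σ i x := fun x => by simp [hA]
  have hAw : A w = ∑ i, σ i w := (hAx w).trans hα.1
  have hAσ : ∀ j, j ≠ 0 → A (σ j w) = w - σ j w := fun j hj => (hAx _).trans (hα.2 j hj)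
  have hk : (k : F) ≠ 0 := Nat.cast_ne_zero.mpr (NeZero.ne k)
  have hAunit : IsUnit A := (isUnit_iff_range_eq_top A).mpr <| range_eq_top.mpr <|
    surjective_of_apply_eq_sub hspan (i₀ := 0) (by simpa using hk) (by simpa [hσ0] using hAw)
      (by simpa [hσ0] using hAσ)
  obtain ⟨b, hb⟩ := exists_basis_eq_inv_apply hσ hli hspan
  have heb : ∀ i j, e i (b j) = if i = j then b j else 0 := fun i j => by
    rw [he, hb, conj_apply_inv_apply_eq_ite hAunit
      (hEhat ▸ averaging_apply_eq_ite hσ hσ0 hk hAw hAσ)]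
    simp only [hσ.injective.eq_iff]
  have hcoi := b.completeOrthogonalIdempotents_of_apply_eq_ite heb
  refine ⟨hAunit, fun i => ⟨b.ne_zero_of_apply_eq_ite heb i, hcoi.idem i⟩,
    fun i j => (hcoi.ortho ·), hcoi.complete, ?_⟩
  rintro i ⟨e', e'', he', he'', hidem', hidem'', horth, hsplit⟩
  have hrank : finrank F (range (e i)) ≤ 1 := by
    rw [b.range_eq_span_singleton_of_apply_eq_ite heb, finrank_span_singleton (b.ne_zero i)]
  rw [hsplit] at hrank
  exact (Module.End.eq_zero_or_eq_zero_of_finrank_range_le_one hidem' hidem'' horth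
    (hsplit ▸ hcoi.idem i) hrank).elim he' he''

/-- With `E/F` a finite Galois extension of characteristic-zero fields
of degree `k`, Galois group enumerated as `σ 0 = id, …, σ (k-1)`, `w` a normal element,
and `α` a solution of the linear system of Statement 2, set (in the `F`-algebra
`Module.End F E`) `Ê = (1/k) ∑ i, σ i` and `A = ∑ i (mul by α i) ∘ σ i` (which is
invertible).  Then the family `e i = σ i⁻¹ ∘ A⁻¹ ∘ Ê ∘ A ∘ σ i` is a complete set of
orthogonal primitive idempotents of `Module.End F E`. -/
theorem stmt3 {F E : Type*} [Field F] [Field E] [Algebra F E] [CharZero F]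
    [FiniteDimensional F E] [IsGalois F E] {k : ℕ} [NeZero k]
    (hk : Module.finrank F E = k)
    (σ : Fin k → (E ≃ₐ[F] E)) (hσ : Function.Bijective σ) (hσ0 : σ 0 = 1)
    (w : E)
    (hli : LinearIndependent F (fun i : Fin k => σ i w))
    (hspan : Submodule.span F (Set.range fun i : Fin k => σ i w) = ⊤)
    (α : Fin k → E)
    (hα : (∑ i, α i * σ i w = ∑ i, σ i w) ∧
      ∀ j : Fin k, j ≠ 0 → ∑ i, α i * σ i (σ j w) = w - σ j w)
    (Ehat A : Module.End F E)
    (hEhat : Ehat = (k : F)⁻¹ • ∑ i, ((σ i).toLinearMap : Module.End F E))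
    (hA : A = ∑ i, (LinearMap.mulLeft F (α i) : Module.End F E) * (σ i).toLinearMap)
    (e : Fin k → Module.End F E)
    (he : ∀ i, e i = (((σ i)⁻¹ : E ≃ₐ[F] E).toLinearMap : Module.End F E) *
        Ring.inverse A * Ehat * A * (σ i).toLinearMap) :
    IsUnit A ∧
    (∀ i, e i ≠ 0 ∧ IsIdempotentElem (e i)) ∧
    (∀ i j, i ≠ j → e i * e j = 0) ∧
    (∑ i, e i = 1) ∧
    (∀ i, ¬ ∃ e' e'' : Module.End F E, e' ≠ 0 ∧ e'' ≠ 0 ∧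
      IsIdempotentElem e' ∧ IsIdempotentElem e'' ∧ e' * e'' = 0 ∧ e i = e' + e'') :=
  stmt3_general σ hσ hσ0 w hli hspan α hα Ehat A hEhat hA e he
end

section
/- Let G be a finite group and (H,K) a Shoda pair of G with H normal in G. Then (H,K) is a strong Shoda pair of G; that is: (SS1) H is normal in N_G(K); (SS2) H/K is cyclic and a maximal abelian subgroup of N_G(K)/K; and (SS3) for every g ∈ G with g ∉ N_G(K), ε(H,K)·(g⁻¹ ε(H,K) g) = 0 in ℚ[G]. -/
open scoped Classical

namespace Paper

variable {G : Type*} [Group G] [Fintype G]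

noncomputable instance : Fintype (Subgroup G) :=
  Fintype.ofInjective (fun H : Subgroup G => (H : Set G)) SetLike.coe_injective

/-- `M̂ = (1/|M|) ∑_{m ∈ M} m` in the rational group algebra `ℚ[G]`. -/
noncomputable def hat (M : Subgroup G) : MonoidAlgebra ℚ G :=
  (Nat.card M : ℚ)⁻¹ • ∑ m : M, MonoidAlgebra.of ℚ G (m : G)

/-- `L` is a normal subgroup of `H` properly containing `K`. -/
def NormalOver (H K L : Subgroup G) : Prop :=
  L ≤ H ∧ K < L ∧ ∀ h ∈ H, ∀ g ∈ L, h⁻¹ * g * h ∈ L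

/-- `L` is minimal among the normal subgroups of `H` properly containing `K`. -/
def MinimalOver (H K L : Subgroup G) : Prop :=
  NormalOver H K L ∧ ∀ L' : Subgroup G, NormalOver H K L' → L' ≤ L → L' = L

/-- `ε(H,K) = K̂` if `H = K`, and otherwise `∏_L (K̂ - L̂)`, the product running over
the normal subgroups `L` of `H` minimal with respect to properly containing `K`
(all such factors commute pairwise, so the product is order-independent). -/
noncomputable def eps (H K : Subgroup G) : MonoidAlgebra ℚ G :=
  if H = K then hat K
  else (({L : Subgroup G | MinimalOver H K L}.toFinset).toList.map
    fun L => hat K - hat L).prod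

/-- The subgroup `[H,g] = ⟨g⁻¹h⁻¹gh : h ∈ H⟩`. -/
def commSub (H : Subgroup G) (g : G) : Subgroup G :=
  Subgroup.closure {c : G | ∃ h ∈ H, c = g⁻¹ * h⁻¹ * g * h}

/-- The quotient `H/K` is cyclic (elementwise formulation: some `h ∈ H` is such that
every `g ∈ H` lies in a coset `h^m K`). -/
def CyclicQuot (H K : Subgroup G) : Prop :=
  ∃ h ∈ H, ∀ g ∈ H, ∃ m : ℤ, (h ^ m)⁻¹ * g ∈ K

/-- `K` is normal in `H` (elementwise formulation). -/
def NormalIn (H K : Subgroup G) : Prop :=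
  ∀ h ∈ H, ∀ g ∈ K, h⁻¹ * g * h ∈ K

/-- `(H,K)` is a Shoda pair of `G`. -/
def IsShodaPair (H K : Subgroup G) : Prop :=
  K ≤ H ∧ NormalIn H K ∧ CyclicQuot H K ∧
    ∀ g : G, commSub H g ⊓ H ≤ K → g ∈ H

/-- `(H,K)` is a strong Shoda pair of `G`: conditions (SS1), (SS2), (SS3).
Maximal abelianness of `H/K` in `N_G(K)/K` is phrased via the Galois correspondence
between subgroups of `N_G(K)/K` and subgroups of `G` lying between `K` and `N_G(K)`. -/
def IsStrongShodaPair (H K : Subgroup G) : Prop :=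
  -- (SS1): `H` is a normal subgroup of `N_G(K)`
  (H ≤ Subgroup.normalizer (K : Set G) ∧ ∀ g ∈ Subgroup.normalizer (K : Set G), ∀ h ∈ H, g⁻¹ * h * g ∈ H) ∧
  -- (SS2): `H/K` is cyclic and a maximal abelian subgroup of `N_G(K)/K`
  (CyclicQuot H K ∧
    (∀ h₁ ∈ H, ∀ h₂ ∈ H, h₁⁻¹ * h₂⁻¹ * h₁ * h₂ ∈ K) ∧
    ∀ C : Subgroup G, K ≤ C → C ≤ Subgroup.normalizer (K : Set G) →
      (∀ c₁ ∈ C, ∀ c₂ ∈ C, c₁⁻¹ * c₂⁻¹ * c₁ * c₂ ∈ K) → H ≤ C → C = H) ∧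
  -- (SS3): `ε(H,K)·(g⁻¹ ε(H,K) g) = 0` for `g ∉ N_G(K)`
  (∀ g : G, g ∉ Subgroup.normalizer (K : Set G) →
    eps H K * (MonoidAlgebra.of ℚ G g⁻¹ * eps H K * MonoidAlgebra.of ℚ G g) = 0)

end Paper

/-!
(SS1) and (SS2) are elementwise: `H ◁ G` gives (SS1), `H/K` is abelian because it is cyclic,
and an element `c` commuting with `H` modulo `K` has `[H,c] ≤ K`, so `c ∈ H` by the Shoda
condition.

For (SS3) let `g ∉ N_G(K)`. As `H ◁ G`, `K^g = gKg⁻¹` is again normal in `H`, and it is not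
contained in `K`, so `M = K^g K` is a normal subgroup of `H` properly containing `K`. It
contains a minimal such `L`, and `M̂` kills the factor `K̂ - L̂` of `ε(H,K)`; the factors
commute, so `M̂ ε(H,K) = 0`. Since `ε(H,K)` absorbs `K̂` on both sides, `K̂ g⁻¹ = g⁻¹ K̂^g`
and `K̂^g K̂ = M̂`, we get `ε(H,K) g⁻¹ ε(H,K) = ε(H,K) g⁻¹ M̂ ε(H,K) = 0`.
-/

theorem List.mul_prod_eq_prod {M : Type*} [Monoid M] {l : List M} (hl : l ≠ []) {e : M}
    (h : ∀ x ∈ l, e * x = x) : e * l.prod = l.prod := by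
  obtain ⟨a, l', rfl⟩ := List.exists_cons_of_ne_nil hl
  rw [List.prod_cons, ← mul_assoc, h a List.mem_cons_self]

theorem List.mul_prod_eq_zero_of_mem {M : Type*} [MonoidWithZero M] {l : List M}
    (hl : l.Pairwise Commute) {x y : M} (hx : x ∈ l) (hyx : y * x = 0) : y * l.prod = 0 := by
  rw [(List.perm_cons_erase hx).prod_eq' hl, List.prod_cons, ← mul_assoc, hyx, zero_mul]

namespace Paper

open MonoidAlgebra Subgroup

variable {G : Type*} [Group G]

theorem commSub_le_iff {H K : Subgroup G} {g : G} :
    commSub H g ≤ K ↔ ∀ h ∈ H, g⁻¹ * h⁻¹ * g * h ∈ K := by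
  rw [commSub, closure_le]
  exact ⟨fun h x hx => h ⟨x, hx, rfl⟩, by rintro h _ ⟨x, hx, rfl⟩; exact h x hx⟩

theorem eq_of_le_of_commutator_mem {H K C : Subgroup G}
    (hS : ∀ g : G, commSub H g ⊓ H ≤ K → g ∈ H) (hHC : H ≤ C)
    (hC : ∀ c₁ ∈ C, ∀ c₂ ∈ C, c₁⁻¹ * c₂⁻¹ * c₁ * c₂ ∈ K) : C = H :=
  le_antisymm (fun c hc => hS c <| inf_le_left.trans <|
    commSub_le_iff.2 fun h hh => hC c hc h (hHC hh)) hHC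

theorem CyclicQuot.commutator_mem {H K : Subgroup G} (hc : CyclicQuot H K) (hK : NormalIn H K) :
    ∀ h₁ ∈ H, ∀ h₂ ∈ H, h₁⁻¹ * h₂⁻¹ * h₁ * h₂ ∈ K := by
  obtain ⟨x, hx, hgen⟩ := hc
  intro h₁ hh₁ h₂ hh₂
  obtain ⟨a, ha⟩ := hgen h₁ hh₁
  obtain ⟨b, hb⟩ := hgen h₂ hh₂
  have key : h₁⁻¹ * h₂⁻¹ * h₁ * h₂ =
      ((x ^ a)⁻¹ * h₁)⁻¹ * ((x ^ a)⁻¹ * ((x ^ b)⁻¹ * h₂)⁻¹ * x ^ a) *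
        ((x ^ b)⁻¹ * ((x ^ a)⁻¹ * h₁) * x ^ b) * ((x ^ b)⁻¹ * h₂) := by
    group
  rw [key]
  exact mul_mem (mul_mem (mul_mem (inv_mem ha) (hK _ (zpow_mem hx a) _ (inv_mem hb)))
    (hK _ (zpow_mem hx b) _ ha)) hb

theorem normalIn_iff_le_normalizer {H L : Subgroup G} : NormalIn H L ↔ H ≤ normalizer L := by
  refine ⟨fun hL h hh => mem_normalizer_iff''.2 fun n => ⟨hL h hh n, fun hn => ?_⟩,
    fun hH h hh n hn => (mem_normalizer_iff''.1 (hH hh) n).1 hn⟩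
  simpa [mul_assoc] using hL h⁻¹ (inv_mem hh) _ hn

theorem map_conj_lt_sup_of_notMem_normalizer [Finite G] {K : Subgroup G} {g : G}
    (hg : g ∉ normalizer K) :
    K < K.map (MulAut.conj g) ⊔ K := by
  refine le_sup_right.lt_of_ne fun h => hg (mem_normalizer_iff_map_conj_eq.2 ?_)
  exact eq_of_le_of_card_ge (le_sup_left.trans h.ge)
    (card_map_of_injective (MulAut.conj g).injective).ge

theorem le_normalizer_map_conj {H K : Subgroup G} (hn : H.Normal) (hHK : H ≤ normalizer K)
    (g : G) : H ≤ normalizer (K.map (MulAut.conj g : G →* G) : Set G) := by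
  have h := map_mono (f := (MulAut.conj g : G →* G)) hHK
  rw [hn.map_conj_eq] at h
  exact h.trans (map_equiv_normalizer_eq K (MulAut.conj g)).le

variable [Fintype G]

theorem of_mul_hat {B : Subgroup G} {a : G} (ha : a ∈ B) : of ℚ G a * hat B = hat B := by
  rw [hat, mul_smul_comm, Finset.mul_sum]
  congr 1
  exact Fintype.sum_equiv (Equiv.mulLeft ⟨a, ha⟩) _ _ fun m => by simp

theorem hat_mul_of {B : Subgroup G} {a : G} (ha : a ∈ B) : hat B * of ℚ G a = hat B := by
  rw [hat, smul_mul_assoc, Finset.sum_mul]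
  congr 1
  exact Fintype.sum_equiv (Equiv.mulRight ⟨a, ha⟩) _ _ fun m => by simp

theorem inv_card_smul_sum_const (B : Subgroup G) (x : MonoidAlgebra ℚ G) :
    (Nat.card B : ℚ)⁻¹ • ∑ _m : B, x = x := by
  have hB : (Nat.card B : ℚ) ≠ 0 := Nat.cast_ne_zero.2 Nat.card_pos.ne'
  rw [Finset.sum_const, Finset.card_univ, ← Nat.card_eq_fintype_card, ← Nat.cast_smul_eq_nsmul ℚ,
    smul_smul, inv_mul_cancel₀ hB, one_smul]

theorem hat_mul_eq_self {B : Subgroup G} {x : MonoidAlgebra ℚ G}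
    (h : ∀ m ∈ B, of ℚ G m * x = x) : hat B * x = x := by
  rw [hat, smul_mul_assoc, Finset.sum_mul, Finset.sum_congr rfl fun (m : B) _ => h m m.2,
    inv_card_smul_sum_const]

theorem mul_hat_eq_self {B : Subgroup G} {x : MonoidAlgebra ℚ G}
    (h : ∀ m ∈ B, x * of ℚ G m = x) : x * hat B = x := by
  rw [hat, mul_smul_comm, Finset.mul_sum, Finset.sum_congr rfl fun (m : B) _ => h m m.2,
    inv_card_smul_sum_const]

theorem hat_mul_hat_eq_right {A B : Subgroup G} (h : A ≤ B) : hat A * hat B = hat B :=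
  hat_mul_eq_self fun _ hm => of_mul_hat (h hm)

theorem hat_mul_hat_eq_left {A B : Subgroup G} (h : B ≤ A) : hat A * hat B = hat A :=
  mul_hat_eq_self fun _ hm => hat_mul_of (h hm)

theorem hat_commute_of_le {A B : Subgroup G} (h : A ≤ B) : Commute (hat A) (hat B) :=
  (hat_mul_hat_eq_right h).trans (hat_mul_hat_eq_left h).symm

theorem of_mul_hat_mul_of_inv (K : Subgroup G) (a : G) :
    of ℚ G a * hat K * of ℚ G a⁻¹ = hat (K.map (MulAut.conj a)) := by
  let e : K ≃ K.map (MulAut.conj a : G →* G) :=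
    (K.equivMapOfInjective (MulAut.conj a : G →* G) (MulAut.conj a).injective).toEquiv
  rw [hat, hat, mul_smul_comm, smul_mul_assoc, Finset.mul_sum, Finset.sum_mul,
    ← Nat.card_congr e]
  congr 1
  exact Fintype.sum_equiv e _ _ fun k => by simp [e]

theorem commute_of_hat_of_mem_normalizer {K : Subgroup G} {a : G} (ha : a ∈ normalizer K) :
    Commute (of ℚ G a) (hat K) := by
  have h := of_mul_hat_mul_of_inv K a
  rw [mem_normalizer_iff_map_conj_eq.1 ha] at h
  calc of ℚ G a * hat K = of ℚ G a * hat K * of ℚ G a⁻¹ * of ℚ G a := by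
        rw [mul_assoc _ (of ℚ G a⁻¹), ← map_mul, inv_mul_cancel, map_one, mul_one]
    _ = hat K * of ℚ G a := by rw [h]

theorem hat_mul_hat_of_le_normalizer {A B : Subgroup G} (h : B ≤ normalizer A) :
    hat A * hat B = hat (A ⊔ B) := by
  have hstab : ∀ m ∈ A ⊔ B, of ℚ G m * (hat A * hat B) = hat A * hat B := by
    intro m hm
    rw [← SetLike.mem_coe, coe_mul_of_right_le_normalizer_left A B h] at hm
    obtain ⟨a, ha, b, hb, rfl⟩ := hm
    rw [map_mul, mul_assoc, ← mul_assoc (of ℚ G b), commute_of_hat_of_mem_normalizer (h hb),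
      mul_assoc, of_mul_hat hb, ← mul_assoc, of_mul_hat ha]
  rw [← hat_mul_eq_self hstab, ← mul_assoc, hat_mul_hat_eq_left le_sup_left,
    hat_mul_hat_eq_left le_sup_right]

theorem hat_commute_of_normalIn {H L L' : Subgroup G} (hL : L ≤ H) (hL' : L' ≤ H)
    (hNL : NormalIn H L) (hNL' : NormalIn H L') : Commute (hat L) (hat L') := by
  rw [Commute, SemiconjBy,
    hat_mul_hat_of_le_normalizer (hL'.trans (normalIn_iff_le_normalizer.1 hNL)),
    hat_mul_hat_of_le_normalizer (hL.trans (normalIn_iff_le_normalizer.1 hNL')), sup_comm]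

theorem exists_minimalOver_le {H K M : Subgroup G} (hM : NormalOver H K M) :
    ∃ L, MinimalOver H K L ∧ L ≤ M := by
  obtain ⟨L, hLM, hL⟩ := exists_minimal_le_of_wellFoundedLT (NormalOver H K) M hM
  exact ⟨L, ⟨hL.prop, fun L' hL' hle => le_antisymm hle (hL.le_of_le hL' hle)⟩, hLM⟩

noncomputable def epsFactors (H K : Subgroup G) : List (MonoidAlgebra ℚ G) :=
  ({L : Subgroup G | MinimalOver H K L}.toFinset).toList.map fun L => hat K - hat L

theorem eps_of_ne {H K : Subgroup G} (h : H ≠ K) : eps H K = (epsFactors H K).prod :=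
  if_neg h

theorem mem_epsFactors {H K : Subgroup G} {x : MonoidAlgebra ℚ G} :
    x ∈ epsFactors H K ↔ ∃ L, MinimalOver H K L ∧ hat K - hat L = x := by
  simp [epsFactors]

theorem epsFactors_ne_nil {H K : Subgroup G} (hKH : K < H) : epsFactors H K ≠ [] := by
  obtain ⟨L, hL, -⟩ := exists_minimalOver_le (⟨le_rfl, hKH, fun h hh g hg =>
    H.mul_mem (H.mul_mem (inv_mem hh) hg) hh⟩ : NormalOver H K H)
  exact List.ne_nil_of_mem (mem_epsFactors.2 ⟨L, hL, rfl⟩)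

theorem epsFactors_pairwise_commute (H K : Subgroup G) : (epsFactors H K).Pairwise Commute := by
  refine List.pairwise_of_forall_mem_list fun x hx y hy => ?_
  obtain ⟨L, hL, rfl⟩ := mem_epsFactors.1 hx
  obtain ⟨L', hL', rfl⟩ := mem_epsFactors.1 hy
  have hLL' := hat_commute_of_normalIn hL.1.1 hL'.1.1 hL.1.2.2 hL'.1.2.2
  exact ((Commute.refl _).sub_right (hat_commute_of_le hL'.1.2.1.le)).sub_left
    ((hat_commute_of_le hL.1.2.1.le).symm.sub_right hLL')

theorem hat_commute_eps (H K : Subgroup G) : Commute (hat K) (eps H K) := by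
  by_cases hHK : H = K
  · rw [eps, if_pos hHK]
  rw [eps_of_ne hHK]
  refine Commute.list_prod_right _ _ fun x hx => ?_
  obtain ⟨L, hL, rfl⟩ := mem_epsFactors.1 hx
  exact (Commute.refl _).sub_right (hat_commute_of_le hL.1.2.1.le)

theorem hat_mul_eps {H K : Subgroup G} (hKH : K ≤ H) : hat K * eps H K = eps H K := by
  by_cases hHK : H = K
  · rw [eps, if_pos hHK, hat_mul_hat_eq_right le_rfl]
  rw [eps_of_ne hHK]
  refine List.mul_prod_eq_prod (epsFactors_ne_nil (hKH.lt_of_ne (Ne.symm hHK))) fun x hx => ?_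
  obtain ⟨L, hL, rfl⟩ := mem_epsFactors.1 hx
  rw [mul_sub, hat_mul_hat_eq_right le_rfl, hat_mul_hat_eq_right hL.1.2.1.le]

theorem hat_mul_eps_eq_zero {H K M : Subgroup G} (hM : NormalOver H K M) :
    hat M * eps H K = 0 := by
  obtain ⟨L, hL, hLM⟩ := exists_minimalOver_le hM
  rw [eps_of_ne (hM.2.1.trans_le hM.1).ne']
  refine List.mul_prod_eq_zero_of_mem (epsFactors_pairwise_commute H K)
    (mem_epsFactors.2 ⟨L, hL, rfl⟩) ?_
  rw [mul_sub, hat_mul_hat_eq_left hM.2.1.le, hat_mul_hat_eq_left hLM, sub_self]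

theorem normalOver_map_conj_sup {H K : Subgroup G} (hn : H.Normal) (hKH : K ≤ H)
    (hHK : H ≤ normalizer K) {g : G} (hg : g ∉ normalizer K) :
    NormalOver H K (K.map (MulAut.conj g) ⊔ K) := by
  have hK'H : K.map (MulAut.conj g) ≤ H := by
    simpa only [hn.map_conj_eq] using map_mono (f := (MulAut.conj g : G →* G)) hKH
  refine ⟨sup_le hK'H hKH, map_conj_lt_sup_of_notMem_normalizer hg,
    normalIn_iff_le_normalizer.2 ?_⟩
  exact (le_inf (le_normalizer_map_conj hn hHK g) hHK).trans
    (normalizer_inf_normalizer_le_normalizer_sup _ _)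

theorem eps_mul_conj_eps_eq_zero {H K : Subgroup G} (hn : H.Normal) (hKH : K ≤ H)
    (hHK : H ≤ normalizer K) {g : G} (hg : g ∉ normalizer K) :
    eps H K * (of ℚ G g⁻¹ * eps H K * of ℚ G g) = 0 := by
  set K' := K.map (MulAut.conj g : G →* G)
  have hM := normalOver_map_conj_sup hn hKH hHK hg
  have hconj : hat K * of ℚ G g⁻¹ = of ℚ G g⁻¹ * hat K' := by
    rw [← of_mul_hat_mul_of_inv, ← mul_assoc, ← mul_assoc, ← map_mul, inv_mul_cancel, map_one,
      one_mul]
  have hsup : hat K' * hat K = hat (K' ⊔ K) :=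
    hat_mul_hat_of_le_normalizer (hKH.trans (le_normalizer_map_conj hn hHK g))
  calc eps H K * (of ℚ G g⁻¹ * eps H K * of ℚ G g)
      = eps H K * hat K * of ℚ G g⁻¹ * (hat K * eps H K) * of ℚ G g := by
        rw [hat_mul_eps hKH, ← (hat_commute_eps H K).eq, hat_mul_eps hKH]
        simp only [mul_assoc]
    _ = eps H K * of ℚ G g⁻¹ * (hat (K' ⊔ K) * eps H K) * of ℚ G g := by
        rw [mul_assoc (eps H K), hconj, ← hsup]; simp only [mul_assoc]
    _ = 0 := by rw [hat_mul_eps_eq_zero hM, mul_zero, zero_mul]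

end Paper

/-- A Shoda pair `(H,K)` of a finite group `G` with `H` normal in `G`
is a strong Shoda pair of `G`. -/
theorem stmt5 {G : Type*} [Group G] [Fintype G] (H K : Subgroup G)
    (hSP : Paper.IsShodaPair H K) (hn : H.Normal) :
    Paper.IsStrongShodaPair H K := by
  obtain ⟨hKH, hNK, hcyc, hshoda⟩ := hSP
  have hHK : H ≤ Subgroup.normalizer (K : Set G) := Paper.normalIn_iff_le_normalizer.1 hNK
  exact ⟨⟨hHK, fun g _ h hh => by simpa using hn.conj_mem h hh g⁻¹⟩,
    ⟨hcyc, hcyc.commutator_mem hNK,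
      fun _ _ _ hC hHC => Paper.eq_of_le_of_commutator_mem hshoda hHC hC⟩,
    fun _ hg => Paper.eps_mul_conj_eps_eq_zero hn hKH hHK hg⟩
end

section
/- Let G be the group of order p^{2r+1}·2^n described in the context, with P the subgroup generated by x, y₁, …, y_r, z₁, …, z_r. Then the commutator subgroup of G equals the subgroup generated by P and a². -/
namespace Paper

/-- The data of the group `G = P ⋊ D_{2^n}` of order `p^{2r+1}·2^n`: an odd prime
`p ≡ 1 (mod 4)`, `r ≥ 1`, `n ≥ 3` with `2^{n-1}` the exact power of `2` dividing
`p - 1`, an integer `k` of multiplicative order `2^{n-1}` modulo `p` with inverse `q`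
modulo `p`, and generators `x, y₁, …, y_r, z₁, …, z_r, a, b` of `G` subject to the
listed relations (commutator convention `[u,v] = u⁻¹v⁻¹uv`). -/
structure GData (G : Type*) [Group G] [Fintype G] where
  p : ℕ
  r : ℕ
  n : ℕ
  k : ℕ
  q : ℕ
  x : G
  y : Fin r → G
  z : Fin r → G
  a : G
  b : G
  hp : p.Prime
  hp4 : p % 4 = 1
  hr : 1 ≤ r
  hn : 3 ≤ n
  hdvd : 2 ^ (n - 1) ∣ p - 1
  hndvd : ¬ 2 ^ n ∣ p - 1
  hordk : orderOf ((k : ZMod p)) = 2 ^ (n - 1)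
  hkq : ((k : ZMod p)) * (q : ZMod p) = 1
  hcard : Fintype.card G = p ^ (2 * r + 1) * 2 ^ n
  hgen : Subgroup.closure (({x, a, b} : Set G) ∪ Set.range y ∪ Set.range z) = ⊤
  hxp : x ^ p = 1
  hyp : ∀ i, y i ^ p = 1
  hzp : ∀ i, z i ^ p = 1
  han : a ^ 2 ^ (n - 1) = 1
  hb2 : b ^ 2 = 1
  hxy : ∀ i, x⁻¹ * (y i)⁻¹ * x * y i = 1
  hxz : ∀ i, x⁻¹ * (z i)⁻¹ * x * z i = 1
  hyy : ∀ i j, (y i)⁻¹ * (y j)⁻¹ * y i * y j = 1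
  hzz : ∀ i j, (z i)⁻¹ * (z j)⁻¹ * z i * z j = 1
  hyz : ∀ i, (y i)⁻¹ * (z i)⁻¹ * y i * z i = x
  hyz' : ∀ i j, i ≠ j → (y i)⁻¹ * (z j)⁻¹ * y i * z j = 1
  hax : a⁻¹ * x⁻¹ * a * x = 1
  hay : ∀ i, a⁻¹ * (y i)⁻¹ * a * y i = (y i) ^ (1 - (k : ℤ))
  haz : ∀ i, a⁻¹ * (z i)⁻¹ * a * z i = (z i) ^ (1 - (q : ℤ))
  hbx : b⁻¹ * x⁻¹ * b * x = x ^ 2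
  hby : ∀ i, b⁻¹ * (y i)⁻¹ * b * y i = z i * y i
  hbz : ∀ i, b⁻¹ * (z i)⁻¹ * b * z i = y i * z i
  hba : b⁻¹ * a⁻¹ * b * a = a ^ 2

variable {G : Type*} [Group G] [Fintype G]

/-- The subgroup `P = ⟨x, y₁, …, y_r, z₁, …, z_r⟩` of `G`. -/
def GData.P (d : GData G) : Subgroup G :=
  Subgroup.closure (({d.x} : Set G) ∪ Set.range d.y ∪ Set.range d.z)

end Paper

/-!
Put `N = P ⊔ ⟨a²⟩`. Each generator of `G` conjugates the generators of `N` into `N`, because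
their commutators `1, y_i^{1-k}, z_i^{1-q}, x², z_i y_i, y_i z_i, a⁴` lie in `N`; so `N` is normal.
Modulo `N` the generators `x, y_i, z_i` vanish and `a, b` commute since `[b, a] = a²`, hence
`G / N` is abelian. Conversely `x = [y_i, z_i]` and `a² = [b, a]` are commutators, and `y_i, z_i`
are powers of `[a, y_i] = y_i^{1-k}` and `[a, z_i] = z_i^{1-q}`: they have order `p` and
`k, q ≢ 1 (mod p)` because `k` has order `2^{n-1} > 1`.
-/

open Subgroup

section General

variable {G : Type*} [Group G]

theorem inv_mul_inv_mul_mul_mem_commutator (g h : G) : g⁻¹ * h⁻¹ * g * h ∈ commutator G := by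
  rw [commutator_def, ← inv_inv g, ← inv_inv h, inv_inv g⁻¹, inv_inv h⁻¹, ← commutatorElement_def]
  exact commutator_mem_commutator (mem_top _) (mem_top _)

theorem mem_zpowers_zpow_of_pow_eq_one {p : ℕ} (hp : p.Prime) {g : G} (hg : g ^ p = 1) {m : ℤ}
    (hm : (m : ZMod p) ≠ 0) : g ∈ zpowers (g ^ m) := by
  have hpm : Nat.Coprime p m.natAbs := by
    rw [hp.coprime_iff_not_dvd, ← Int.natCast_dvd, ← ZMod.intCast_zmod_eq_zero_iff_dvd]
    exact hm
  exact mem_zpowers_zpow_iff.mpr (hpm.symm.coprime_dvd_right (orderOf_dvd_of_pow_eq_one hg))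

theorem normal_closure_of_commutator_mem [Finite G] {S T : Set G} (hS : closure S = ⊤)
    (h : ∀ s ∈ S, ∀ t ∈ T, s⁻¹ * t⁻¹ * s * t ∈ closure T) : (closure T).Normal := by
  rw [← normalizer_eq_top_iff, eq_top_iff, ← hS, closure_le]
  intro s hs
  rw [SetLike.mem_coe, ← inv_mem_iff]
  -- `s⁻¹ ts = t [s, t]⁻¹` shows that conjugation by `s⁻¹` maps `⟨T⟩` into, hence onto, itself.
  apply mem_normalizer_fintype
  intro n hn
  have hconj : map (MulAut.conj s⁻¹).toMonoidHom (closure T) ≤ closure T := by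
    rw [MonoidHom.map_closure, closure_le]
    rintro _ ⟨t, ht, rfl⟩
    have e : (MulAut.conj s⁻¹).toMonoidHom t = t * (s⁻¹ * t⁻¹ * s * t)⁻¹ := by
      rw [MulEquiv.toMonoidHom_eq_coe, MonoidHom.coe_coe, MulAut.conj_apply]; group
    rw [e]
    exact mul_mem (subset_closure ht) (inv_mem (h s hs t ht))
  simpa using hconj ⟨n, hn, rfl⟩

theorem commutator_le_of_closure_eq_top {S : Set G} (hS : closure S = ⊤) {N : Subgroup G}
    [N.Normal] (h : ∀ s ∈ S, ∀ t ∈ S, s⁻¹ * t⁻¹ * s * t ∈ N) : commutator G ≤ N := by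
  rw [← Normal.quotient_commutative_iff_commutator_le]
  set φ := QuotientGroup.mk' N
  have hcl : closure (φ '' S) = ⊤ := by
    rw [← MonoidHom.map_closure, hS]
    exact map_top_of_surjective _ (QuotientGroup.mk'_surjective N)
  have hcomm : ∀ u ∈ φ '' S, ∀ v ∈ φ '' S, u * v = v * u := by
    rintro _ ⟨s, hs, rfl⟩ _ ⟨t, ht, rfl⟩
    have h1 : φ (s⁻¹ * t⁻¹ * s * t) = 1 := (QuotientGroup.eq_one_iff _).mpr (h s hs t ht)
    simp only [map_mul, map_inv] at h1
    calc φ s * φ t = φ t * φ s * ((φ s)⁻¹ * (φ t)⁻¹ * φ s * φ t) := by group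
      _ = φ t * φ s := by rw [h1, mul_one]
  have hcent := closure_le_centralizer_centralizer (φ '' S)
  rw [hcl] at hcent
  exact ⟨⟨fun u v => Set.centralizer_centralizer_comm_of_comm hcomm _ (hcent (mem_top u)) _
    (hcent (mem_top v))⟩⟩

end General

namespace Paper.GData

variable {G : Type*} [Group G] [Fintype G] (d : GData G)

def N : Subgroup G := d.P ⊔ closure {d.a ^ 2}

theorem N_eq_closure :
    d.N = closure (({d.x} ∪ Set.range d.y ∪ Set.range d.z) ∪ {d.a ^ 2}) :=
  (closure_union _ _).symm

theorem x_mem_N : d.x ∈ d.N := mem_sup_left (subset_closure (.inl (.inl rfl)))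

theorem y_mem_N (i : Fin d.r) : d.y i ∈ d.N :=
  mem_sup_left (subset_closure (.inl (.inr ⟨i, rfl⟩)))

theorem z_mem_N (i : Fin d.r) : d.z i ∈ d.N :=
  mem_sup_left (subset_closure (.inr ⟨i, rfl⟩))

theorem a_sq_mem_N : d.a ^ 2 ∈ d.N := mem_sup_right (subset_closure rfl)

theorem mem_N_or_eq_a_or_eq_b {s : G}
    (hs : s ∈ ({d.x, d.a, d.b} : Set G) ∪ Set.range d.y ∪ Set.range d.z) :
    s ∈ d.N ∨ s = d.a ∨ s = d.b := by
  rcases hs with (((rfl | rfl | rfl) | ⟨i, rfl⟩) | ⟨i, rfl⟩)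
  exacts [.inl d.x_mem_N, .inr (.inl rfl), .inr (.inr rfl), .inl (d.y_mem_N i), .inl (d.z_mem_N i)]

theorem commutator_b_a_sq : d.b⁻¹ * (d.a ^ 2)⁻¹ * d.b * d.a ^ 2 = d.a ^ 4 := by
  have h : d.b⁻¹ * d.a⁻¹ * d.b = d.a := by
    calc d.b⁻¹ * d.a⁻¹ * d.b = (d.b⁻¹ * d.a⁻¹ * d.b * d.a) * d.a⁻¹ := by group
      _ = d.a := by rw [d.hba]; group
  calc d.b⁻¹ * (d.a ^ 2)⁻¹ * d.b * d.a ^ 2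
      = (d.b⁻¹ * d.a⁻¹ * d.b) ^ 2 * d.a ^ 2 := by rw [pow_two, pow_two]; group
    _ = d.a ^ 4 := by rw [h]; group

theorem N_normal : d.N.Normal := by
  rw [N_eq_closure]
  refine normal_closure_of_commutator_mem d.hgen fun s hs t ht => ?_
  rw [← N_eq_closure]
  rcases d.mem_N_or_eq_a_or_eq_b hs with hsN | rfl | rfl
  · have htN : t ∈ d.N := by rw [N_eq_closure]; exact subset_closure ht
    exact mul_mem (mul_mem (mul_mem (inv_mem hsN) (inv_mem htN)) hsN) htN
  · rcases ht with (((rfl | ⟨i, rfl⟩) | ⟨i, rfl⟩) | rfl)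
    · rw [d.hax]; exact one_mem _
    · rw [d.hay]; exact zpow_mem (d.y_mem_N i) _
    · rw [d.haz]; exact zpow_mem (d.z_mem_N i) _
    · rw [show d.a⁻¹ * (d.a ^ 2)⁻¹ * d.a * d.a ^ 2 = 1 by group]; exact one_mem _
  · rcases ht with (((rfl | ⟨i, rfl⟩) | ⟨i, rfl⟩) | rfl)
    · rw [d.hbx]; exact pow_mem d.x_mem_N _
    · rw [d.hby]; exact mul_mem (d.z_mem_N i) (d.y_mem_N i)
    · rw [d.hbz]; exact mul_mem (d.y_mem_N i) (d.z_mem_N i)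
    · rw [commutator_b_a_sq, show 4 = 2 * 2 from rfl, pow_mul]; exact pow_mem d.a_sq_mem_N _

theorem commutator_le_N : commutator G ≤ d.N := by
  have := d.N_normal
  have hleft : ∀ {u : G} (v : G), u ∈ d.N → u⁻¹ * v⁻¹ * u * v ∈ d.N := fun v hu => by
    simpa [commutatorElement_def] using
      commutator_le_left d.N ⊤ (commutator_mem_commutator (inv_mem hu) (mem_top v⁻¹))
  have hright : ∀ (u : G) {v : G}, v ∈ d.N → u⁻¹ * v⁻¹ * u * v ∈ d.N := fun u v hv => by
    simpa [mul_assoc] using inv_mem (hleft u hv)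
  refine commutator_le_of_closure_eq_top d.hgen fun s hs t ht => ?_
  rcases d.mem_N_or_eq_a_or_eq_b hs with hsN | rfl | rfl
  · exact hleft t hsN
  · rcases d.mem_N_or_eq_a_or_eq_b ht with htN | rfl | rfl
    · exact hright _ htN
    · simp
    · rw [show d.a⁻¹ * d.b⁻¹ * d.a * d.b = (d.b⁻¹ * d.a⁻¹ * d.b * d.a)⁻¹ by group, d.hba]
      exact inv_mem d.a_sq_mem_N
  · rcases d.mem_N_or_eq_a_or_eq_b ht with htN | rfl | rfl
    · exact hright _ htN
    · rw [d.hba]; exact d.a_sq_mem_N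
    · simp

theorem natCast_k_ne_one : (d.k : ZMod d.p) ≠ 1 := by
  intro h
  have h1 : 2 ^ (d.n - 1) = 1 := by rw [← d.hordk, h, orderOf_one]
  have h2 : d.n - 1 ≠ 0 := by have := d.hn; omega
  exact (Nat.one_lt_two_pow h2).ne' h1

theorem natCast_q_ne_one : (d.q : ZMod d.p) ≠ 1 := by
  intro h
  exact d.natCast_k_ne_one (by simpa [h] using d.hkq)

theorem y_mem_commutator (i : Fin d.r) : d.y i ∈ commutator G := by
  have hm : ((1 - d.k : ℤ) : ZMod d.p) ≠ 0 := by
    push_cast; exact sub_ne_zero.mpr d.natCast_k_ne_one.symm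
  refine zpowers_le.mpr ?_ (mem_zpowers_zpow_of_pow_eq_one d.hp (d.hyp i) hm)
  exact d.hay i ▸ inv_mul_inv_mul_mul_mem_commutator _ _

theorem z_mem_commutator (i : Fin d.r) : d.z i ∈ commutator G := by
  have hm : ((1 - d.q : ℤ) : ZMod d.p) ≠ 0 := by
    push_cast; exact sub_ne_zero.mpr d.natCast_q_ne_one.symm
  refine zpowers_le.mpr ?_ (mem_zpowers_zpow_of_pow_eq_one d.hp (d.hzp i) hm)
  exact d.haz i ▸ inv_mul_inv_mul_mul_mem_commutator _ _

theorem N_le_commutator : d.N ≤ commutator G := by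
  rw [N_eq_closure, closure_le]
  rintro s (((rfl | ⟨i, rfl⟩) | ⟨i, rfl⟩) | rfl)
  · exact d.hyz ⟨0, d.hr⟩ ▸ inv_mul_inv_mul_mul_mem_commutator _ _
  · exact d.y_mem_commutator i
  · exact d.z_mem_commutator i
  · exact d.hba ▸ inv_mul_inv_mul_mul_mem_commutator _ _

end Paper.GData

/-- The commutator subgroup of `G` equals the subgroup generated by
`P` and `a²`. -/
theorem stmt6 {G : Type*} [Group G] [Fintype G] (d : Paper.GData G) :
    commutator G = d.P ⊔ Subgroup.closure {d.a ^ 2} :=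
  le_antisymm d.commutator_le_N d.N_le_commutator
end

section
/- Let G be the group of order p^{2r+1}·2^n described in the context and let H be the subgroup generated by P and b. Then the commutator subgroup of H equals the subgroup generated by x, y₁z₁, y₂z₂, …, y_rz_r. -/
open scoped commutatorElement

namespace Subgroup

variable {G : Type*} [Group G]

theorem mem_normalizer_closure_of_conj_mem [Finite G] {s : Set G} {g : G}
    (h : ∀ t ∈ s, g * t * g⁻¹ ∈ closure s) : g ∈ normalizer (closure s : Set G) := by
  have hconj : closure s ≤ (closure s).comap (MulAut.conj g).toMonoidHom :=
    (closure_le _).2 h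
  exact mem_normalizer_fintype fun n hn => hconj hn

theorem commutatorElement_mem_of_mem_closure {S : Set G} {N : Subgroup G}
    (hS : closure S ≤ normalizer (N : Set G)) {g : G} (hg : ∀ t ∈ S, ⁅g, t⁆ ∈ N) {h : G}
    (hh : h ∈ closure S) : ⁅g, h⁆ ∈ N := by
  induction hh using closure_induction with
  | mem t ht => exact hg t ht
  | one => simp
  | mul h₁ h₂ hh₁ _ ih₁ ih₂ =>
    rw [commutatorElement_mul_right_eq_mul_conj, mul_assoc, mul_assoc, ← mul_assoc h₁]
    exact mul_mem ih₁ ((hS hh₁ _).1 ih₂)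
  | inv h hh ih =>
    rw [commutatorElement_inv_right, ← commutatorElement_inv]
    simpa using (hS (inv_mem hh) _).1 (inv_mem ih)

theorem commutator_closure_le {S : Set G} {N : Subgroup G}
    (hS : closure S ≤ normalizer (N : Set G)) (h : ∀ s ∈ S, ∀ t ∈ S, ⁅s, t⁆ ∈ N) :
    ⁅closure S, closure S⁆ ≤ N := by
  have hgen : ∀ s ∈ S, ∀ g ∈ closure S, ⁅g, s⁆ ∈ N := fun s hs g hg => by
    rw [← commutatorElement_inv]
    exact inv_mem (commutatorElement_mem_of_mem_closure hS (h s hs) hg)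
  exact commutator_le.2 fun g hg g' hg' =>
    commutatorElement_mem_of_mem_closure hS (fun s hs => hgen s hs g hg) hg'

end Subgroup

theorem commute_of_inv_mul_inv_mul_mul_eq_one {G : Type*} [Group G] {a b : G}
    (h : a⁻¹ * b⁻¹ * a * b = 1) : Commute a b :=
  Commute.inv_inv_iff.mp <| commutatorElement_eq_one_iff_commute.mp <| by
    rwa [commutatorElement_def, inv_inv, inv_inv]

theorem commutatorElement_eq_mul_inv_conj {G : Type*} [Group G] (g h : G) :
    ⁅g, h⁆ = g * (h * g * h⁻¹)⁻¹ := by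
  rw [commutatorElement_def]; group

theorem conj_eq_inv_of_inv_mul_inv_mul_mul_eq {G : Type*} [Group G] {b u v : G}
    (hb : b⁻¹ = b) (h : b⁻¹ * u⁻¹ * b * u = v * u) : b * u * b⁻¹ = v⁻¹ := by
  have h' : b⁻¹ * u⁻¹ * b = v := mul_right_cancel h
  calc b * u * b⁻¹ = b⁻¹ * u * b := by rw [hb]
    _ = (b⁻¹ * u⁻¹ * b)⁻¹ := by group
    _ = v⁻¹ := by rw [h']

namespace Paper.GData

variable {G : Type*} [Group G] [Fintype G] (d : GData G)

def gensH : Set G := ({d.x} : Set G) ∪ Set.range d.y ∪ Set.range d.z ∪ {d.b}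

def gensK : Set G := ({d.x} : Set G) ∪ Set.range fun i => d.y i * d.z i

theorem P_sup_closure_b : d.P ⊔ Subgroup.closure {d.b} = Subgroup.closure d.gensH :=
  (Subgroup.closure_union _ _).symm

theorem y_mem_gensH (i : Fin d.r) : d.y i ∈ d.gensH := Or.inl (Or.inl (Or.inr ⟨i, rfl⟩))

theorem z_mem_gensH (i : Fin d.r) : d.z i ∈ d.gensH := Or.inl (Or.inr ⟨i, rfl⟩)

theorem b_mem_gensH : d.b ∈ d.gensH := Or.inr rfl

theorem commute_x_y (i : Fin d.r) : Commute d.x (d.y i) :=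
  commute_of_inv_mul_inv_mul_mul_eq_one (d.hxy i)

theorem commute_x_z (i : Fin d.r) : Commute d.x (d.z i) :=
  commute_of_inv_mul_inv_mul_mul_eq_one (d.hxz i)

theorem commute_y_y (i j : Fin d.r) : Commute (d.y i) (d.y j) :=
  commute_of_inv_mul_inv_mul_mul_eq_one (d.hyy i j)

theorem commute_z_z (i j : Fin d.r) : Commute (d.z i) (d.z j) :=
  commute_of_inv_mul_inv_mul_mul_eq_one (d.hzz i j)

theorem commute_y_z {i j : Fin d.r} (hij : i ≠ j) : Commute (d.y i) (d.z j) :=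
  commute_of_inv_mul_inv_mul_mul_eq_one (d.hyz' i j hij)

theorem y_mul_z (i : Fin d.r) : d.y i * d.z i = d.z i * d.y i * d.x := by
  rw [← d.hyz i]; group

theorem commutatorElement_y_z (i : Fin d.r) : ⁅d.y i, d.z i⁆ = d.x := by
  have hc : Commute (d.z i * d.y i) d.x := ((d.commute_x_z i).mul_right (d.commute_x_y i)).symm
  calc ⁅d.y i, d.z i⁆ = d.y i * d.z i * (d.z i * d.y i)⁻¹ := by rw [commutatorElement_def]; group
    _ = d.x := by rw [d.y_mul_z, hc.mul_inv_cancel]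

theorem conj_y_z (i : Fin d.r) : d.y i * d.z i * (d.y i)⁻¹ = d.z i * d.x := by
  rw [d.y_mul_z]
  simp only [mul_assoc, (d.commute_x_y i).inv_right.eq, mul_inv_cancel_left]

theorem b_inv : d.b⁻¹ = d.b :=
  inv_eq_of_mul_eq_one_right (by rw [← pow_two, d.hb2])

theorem conj_b_x : d.b * d.x * d.b⁻¹ = d.x⁻¹ :=
  conj_eq_inv_of_inv_mul_inv_mul_mul_eq d.b_inv (by rw [d.hbx, pow_two])

theorem conj_b_y (i : Fin d.r) : d.b * d.y i * d.b⁻¹ = (d.z i)⁻¹ :=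
  conj_eq_inv_of_inv_mul_inv_mul_mul_eq d.b_inv (d.hby i)

theorem conj_b_z (i : Fin d.r) : d.b * d.z i * d.b⁻¹ = (d.y i)⁻¹ :=
  conj_eq_inv_of_inv_mul_inv_mul_mul_eq d.b_inv (d.hbz i)

theorem commutatorElement_x_b : ⁅d.x, d.b⁆ = d.x * d.x := by
  rw [commutatorElement_eq_mul_inv_conj, d.conj_b_x, inv_inv]

theorem commutatorElement_y_b (i : Fin d.r) : ⁅d.y i, d.b⁆ = d.y i * d.z i := by
  rw [commutatorElement_eq_mul_inv_conj, d.conj_b_y, inv_inv]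

theorem commutatorElement_z_b (i : Fin d.r) : ⁅d.z i, d.b⁆ = d.z i * d.y i := by
  rw [commutatorElement_eq_mul_inv_conj, d.conj_b_z, inv_inv]

local notation "K" => Subgroup.closure (gensK d)

theorem x_mem_K : d.x ∈ K :=
  Subgroup.subset_closure (Or.inl rfl)

theorem y_mul_z_mem_K (i : Fin d.r) : d.y i * d.z i ∈ K :=
  Subgroup.subset_closure (Or.inr ⟨i, rfl⟩)

theorem z_mul_y_mem_K (i : Fin d.r) : d.z i * d.y i ∈ K := by
  rw [show d.z i * d.y i = d.y i * d.z i * d.x⁻¹ by rw [d.y_mul_z]; group]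
  exact mul_mem (d.y_mul_z_mem_K i) (inv_mem d.x_mem_K)

theorem conj_mem_K {g t : G} (hg : g ∈ d.gensH) (ht : t ∈ d.gensK) : g * t * g⁻¹ ∈ K := by
  have of_commute {g t : G} (hc : Commute g t) (ht : t ∈ K) : g * t * g⁻¹ ∈ K := by
    rwa [hc.mul_inv_cancel]
  rcases ht with rfl | ⟨i, rfl⟩ <;> rcases hg with ((rfl | ⟨j, rfl⟩) | ⟨j, rfl⟩) | rfl
  · exact of_commute (Commute.refl _) d.x_mem_K
  · exact of_commute (d.commute_x_y j).symm d.x_mem_K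
  · exact of_commute (d.commute_x_z j).symm d.x_mem_K
  · exact d.conj_b_x ▸ inv_mem d.x_mem_K
  · exact of_commute ((d.commute_x_y i).mul_right (d.commute_x_z i)) (d.y_mul_z_mem_K i)
  · obtain rfl | hji := eq_or_ne j i
    · rw [show d.y j * (d.y j * d.z j) * (d.y j)⁻¹ = d.y j * (d.y j * d.z j * (d.y j)⁻¹) by
        group, d.conj_y_z, ← mul_assoc]
      exact mul_mem (d.y_mul_z_mem_K j) d.x_mem_K
    · exact of_commute ((d.commute_y_y j i).mul_right (d.commute_y_z hji)) (d.y_mul_z_mem_K i)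
  · obtain rfl | hji := eq_or_ne j i
    · rw [show d.z j * (d.y j * d.z j) * (d.z j)⁻¹ = d.z j * d.y j by group]
      exact d.z_mul_y_mem_K j
    · exact of_commute ((d.commute_y_z hji.symm).symm.mul_right (d.commute_z_z j i))
        (d.y_mul_z_mem_K i)
  · rw [show d.b * (d.y i * d.z i) * d.b⁻¹ = d.b * d.y i * d.b⁻¹ * (d.b * d.z i * d.b⁻¹) by
      group, d.conj_b_y, d.conj_b_z, ← mul_inv_rev]
    exact inv_mem (d.y_mul_z_mem_K i)

theorem commutatorElement_y_z_mem_K (i j : Fin d.r) : ⁅d.y i, d.z j⁆ ∈ K := by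
  obtain rfl | hij := eq_or_ne i j
  · exact d.commutatorElement_y_z i ▸ d.x_mem_K
  · exact (d.commute_y_z hij).commutator_eq ▸ one_mem _

theorem commutatorElement_mem_K {s t : G} (hs : s ∈ d.gensH) (ht : t ∈ d.gensH) :
    ⁅s, t⁆ ∈ K := by
  have of_commute {s t : G} (hc : Commute s t) : ⁅s, t⁆ ∈ K := hc.commutator_eq ▸ one_mem _
  have of_swap {s t : G} (h : ⁅t, s⁆ ∈ K) : ⁅s, t⁆ ∈ K := commutatorElement_inv t s ▸ inv_mem h
  have x_b : ⁅d.x, d.b⁆ ∈ K := d.commutatorElement_x_b ▸ mul_mem d.x_mem_K d.x_mem_K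
  have y_b (i : Fin d.r) : ⁅d.y i, d.b⁆ ∈ K := d.commutatorElement_y_b i ▸ d.y_mul_z_mem_K i
  have z_b (i : Fin d.r) : ⁅d.z i, d.b⁆ ∈ K := d.commutatorElement_z_b i ▸ d.z_mul_y_mem_K i
  rcases hs with ((rfl | ⟨i, rfl⟩) | ⟨i, rfl⟩) | rfl <;>
    rcases ht with ((rfl | ⟨j, rfl⟩) | ⟨j, rfl⟩) | rfl
  exacts [of_commute (Commute.refl _), of_commute (d.commute_x_y j),
    of_commute (d.commute_x_z j), x_b,
    of_commute (d.commute_x_y i).symm, of_commute (d.commute_y_y i j),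
    d.commutatorElement_y_z_mem_K i j, y_b i,
    of_commute (d.commute_x_z i).symm, of_swap (d.commutatorElement_y_z_mem_K j i),
    of_commute (d.commute_z_z i j), z_b i,
    of_swap x_b, of_swap (y_b j), of_swap (z_b j), of_commute (Commute.refl _)]

end Paper.GData

/-- For `H = ⟨P, b⟩`, the commutator subgroup of `H` equals
`⟨x, y₁z₁, …, y_rz_r⟩`. -/
theorem stmt8 {G : Type*} [Group G] [Fintype G] (d : Paper.GData G)
    (H : Subgroup G) (hH : H = d.P ⊔ Subgroup.closure {d.b}) :
    ⁅H, H⁆ = Subgroup.closure (({d.x} : Set G) ∪ Set.range fun i => d.y i * d.z i) := by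
  subst hH
  change _ = Subgroup.closure d.gensK
  rw [d.P_sup_closure_b]
  have mem_H {g : G} (hg : g ∈ d.gensH) : g ∈ Subgroup.closure d.gensH :=
    Subgroup.subset_closure hg
  apply le_antisymm
  · refine Subgroup.commutator_closure_le ((Subgroup.closure_le _).2 fun g hg => ?_)
      fun s hs t ht => d.commutatorElement_mem_K hs ht
    exact Subgroup.mem_normalizer_closure_of_conj_mem fun t ht => d.conj_mem_K hg ht
  · refine (Subgroup.closure_le _).2 ?_
    rintro t (rfl | ⟨i, rfl⟩)
    · rw [← d.commutatorElement_y_z ⟨0, d.hr⟩]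
      exact Subgroup.commutator_mem_commutator (mem_H (d.y_mem_gensH _)) (mem_H (d.z_mem_gensH _))
    · change d.y i * d.z i ∈ _
      rw [← d.commutatorElement_y_b]
      exact Subgroup.commutator_mem_commutator (mem_H (d.y_mem_gensH i)) (mem_H d.b_mem_gensH)
end
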